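/- arXiv:2301.03176 — 2 statements merged into one kernel-verified Lean document; each statement's English description precedes it below -/
import Mathlib

section
/- For every natural number p, every real λ, and every real y with |λy| < 1, one has Σ_{n=0}^∞ (n)_p T_n(y) = (y^{p+1}/(p+1)) (1)_{p+1,λ} (1+λy)^{−(p+1)} e_λ(y), where (n)_p = n(n−1)⋯(n−p+1) is the ordinary falling factorial (with (n)_0 = 1) and the series on the left converges. -/
noncomputable section

/-- Generalized falling factorial `(x)_{n,λ} = x(x-λ)⋯(x-(n-1)λ)`, with `(x)_{0,λ} = 1`. -/
def dff (lam x : ℝ) (n : ℕ) : ℝ := ∏ i ∈ Finset.range n, (x - i * lam)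

/-- Degenerate exponential `e_λ(y) = ∑_{n=0}^∞ (1)_{n,λ} y^n / n!`. -/
def dexp (lam y : ℝ) : ℝ := ∑' n : ℕ, dff lam 1 n * y ^ n / n.factorial

/-- Truncated degenerate exponential tail
`T_n(y) = e_λ(y) - ∑_{k=0}^n (1)_{k,λ} y^k / k!`. -/
def dtail (lam y : ℝ) (n : ℕ) : ℝ :=
  dexp lam y - ∑ k ∈ Finset.range (n + 1), dff lam 1 k * y ^ k / k.factorial

/-!
With `a m = (1)_{m,λ} y^m / m!` the tail is `T_n = ∑_{m > n} a m`, so exchanging the order of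
summation (legitimate because the terms are nonnegative multiples of an absolutely convergent
series) gives `∑_n (n)_p T_n = ∑_m a m ∑_{n < m} (n)_p = ∑_m (m)_{p+1} a m / (p+1)`.
Since `(m)_{p+1} (1)_{m,λ} / m! = (1)_{p+1,λ} (x)_{m-p-1,λ} / (m-p-1)!` with `x = 1 - (p+1)λ`,
this equals `(1)_{p+1,λ} y^{p+1} / (p+1) · e(x)`, where `e(x) = ∑_j (x)_{j,λ} y^j / j!`.
Comparing coefficients shows `e(x) = (1 + λy) e(x - λ)` (the series form of
`(1 + λy)^{x/λ}`), hence `e_λ(y) = e(1) = (1 + λy)^{p+1} e(1 - (p+1)λ)`.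
-/

open Finset Filter Topology

lemma Nat.sum_range_descFactorial_mul (p m : ℕ) :
    (∑ n ∈ range m, n.descFactorial p) * (p + 1) = m.descFactorial (p + 1) := by
  induction m with
  | zero => simp
  | succ m ih =>
    rw [sum_range_succ, add_mul, ih, Nat.succ_descFactorial_succ, Nat.descFactorial_succ]
    rcases le_or_gt p m with h | h
    · rw [show m + 1 = m - p + (p + 1) by omega]
      ring
    · simp [Nat.descFactorial_eq_zero_iff_lt.mpr h]

def triangularProd (b a : ℕ → ℝ) (q : ℕ × ℕ) : ℝ := if q.2 < q.1 then b q.2 * a q.1 else 0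

lemma hasSum_triangularProd_row (b a : ℕ → ℝ) (m : ℕ) :
    HasSum (fun n => triangularProd b a (m, n)) ((∑ n ∈ range m, b n) * a m) := by
  rw [sum_mul, ← sum_congr rfl fun n hn => if_pos (mem_range.mp hn)]
  exact hasSum_sum_of_ne_finset_zero fun n hn => if_neg (by simpa using hn)

lemma hasSum_triangularProd_column (b : ℕ → ℝ) {a : ℕ → ℝ} (ha : Summable a) (n : ℕ) :
    HasSum (fun m => triangularProd b a (m, n)) (b n * ∑' m, a (m + (n + 1))) := by
  have hzero : ∑ m ∈ range (n + 1), triangularProd b a (m, n) = 0 :=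
    sum_eq_zero fun m hm => if_neg (by simp only [mem_range] at hm; omega)
  rw [← add_zero (b n * _), ← hzero, ← hasSum_nat_add_iff]
  have hshift : ∀ k, triangularProd b a (k + (n + 1), n) = b n * a (k + (n + 1)) :=
    fun k => if_pos (by simp only; omega)
  simp_rw [hshift]
  exact ((summable_nat_add_iff (n + 1)).mpr ha).hasSum.mul_left _

lemma abs_triangularProd {b : ℕ → ℝ} (hb : ∀ n, 0 ≤ b n) (a : ℕ → ℝ) (q : ℕ × ℕ) :
    |triangularProd b a q| = triangularProd b (fun m => |a m|) q := by
  unfold triangularProd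
  split_ifs
  · rw [abs_mul, abs_of_nonneg (hb _)]
  · exact abs_zero

lemma hasSum_mul_tsum_tail {a b : ℕ → ℝ} {s : ℝ} (hb : ∀ n, 0 ≤ b n) (ha : Summable a)
    (hab : HasSum (fun m => (∑ n ∈ range m, b n) * a m) s) :
    HasSum (fun n => b n * ∑' m, a (m + (n + 1))) s := by
  have habs : Summable (triangularProd b fun m => |a m|) := by
    rw [summable_prod_of_nonneg fun q => abs_triangularProd hb a q ▸ abs_nonneg _]
    refine ⟨fun m => (hasSum_triangularProd_row b _ m).summable, ?_⟩
    simp_rw [(hasSum_triangularProd_row b _ _).tsum_eq]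
    refine (summable_abs_iff.mpr hab.summable).congr fun m => ?_
    rw [abs_mul, abs_of_nonneg (sum_nonneg fun n _ => hb n)]
  have hT : Summable (triangularProd b a) :=
    .of_norm (by simpa only [Real.norm_eq_abs, abs_triangularProd hb] using habs)
  rw [hab.unique (hT.hasSum.prod_fiberwise (hasSum_triangularProd_row b a))]
  exact ((Equiv.prodComm ℕ ℕ).hasSum_iff.mpr hT.hasSum).prod_fiberwise
    (hasSum_triangularProd_column b ha)

lemma dff_succ (lam x : ℝ) (n : ℕ) : dff lam x (n + 1) = dff lam x n * (x - n * lam) :=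
  prod_range_succ _ _

lemma dff_add (lam x : ℝ) (n k : ℕ) :
    dff lam x (n + k) = dff lam x n * dff lam (x - n * lam) k := by
  rw [dff, prod_range_add]
  congr 1
  refine prod_congr rfl fun i _ => ?_
  push_cast
  ring

lemma dff_succ' (lam x : ℝ) (n : ℕ) : dff lam x (n + 1) = x * dff lam (x - lam) n := by
  simpa [add_comm 1 n, dff] using dff_add lam x 1 n

def dexpTerm (lam x y : ℝ) (m : ℕ) : ℝ := dff lam x m * y ^ m / m.factorial

lemma dexp_eq_tsum_dexpTerm (lam y : ℝ) : dexp lam y = ∑' m, dexpTerm lam 1 y m := rfl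

lemma dexpTerm_zero (lam x y : ℝ) : dexpTerm lam x y 0 = 1 := by
  simp [dexpTerm, dff]

lemma dexpTerm_succ (lam x y : ℝ) (m : ℕ) :
    dexpTerm lam x y (m + 1) = dexpTerm lam x y m * ((x - m * lam) * y / (m + 1)) := by
  simp only [dexpTerm, dff_succ, pow_succ, Nat.factorial_succ, Nat.cast_mul]
  field_simp
  push_cast
  ring

lemma dexpTerm_succ_sub (lam x y : ℝ) (m : ℕ) :
    dexpTerm lam x y (m + 1) - dexpTerm lam (x - lam) y (m + 1) =
      lam * y * dexpTerm lam (x - lam) y m := by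
  rw [dexpTerm, dexpTerm, dexpTerm, dff_succ', dff_succ, Nat.factorial_succ]
  push_cast
  field_simp
  ring

lemma descFactorial_mul_dexpTerm_add (lam x y : ℝ) (q j : ℕ) :
    ((j + q).descFactorial q : ℝ) * dexpTerm lam x y (j + q) =
      dff lam x q * y ^ q * dexpTerm lam (x - q * lam) y j := by
  have hfact : ((j + q).descFactorial q : ℝ) * j.factorial = (j + q).factorial := by
    rw [mul_comm]
    exact_mod_cast Nat.add_sub_cancel j q ▸ Nat.factorial_mul_descFactorial (Nat.le_add_left q j)
  have hD : ((j + q).descFactorial q : ℝ) ≠ 0 := by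
    exact_mod_cast (Nat.descFactorial_pos.mpr (Nat.le_add_left q j)).ne'
  rw [dexpTerm, dexpTerm, ← hfact, add_comm j q, dff_add, pow_add]
  field_simp

lemma summable_dexpTerm {lam y : ℝ} (hy : |lam * y| < 1) (x : ℝ) :
    Summable (dexpTerm lam x y) := by
  obtain ⟨r, hr0, hr1⟩ := exists_between hy
  have hratio : Tendsto (fun m : ℕ => (x - m * lam) * y / (m + 1)) atTop (𝓝 (-(lam * y))) := by
    have h := (tendsto_one_div_add_atTop_nhds_zero_nat (𝕜 := ℝ)).const_mul ((x + lam) * y)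
    rw [mul_zero] at h
    convert h.sub_const (lam * y) using 2 with m
    · field_simp
      ring
    · ring
  have hr : ∀ᶠ m : ℕ in atTop, ‖(x - m * lam) * y / (m + 1)‖ ≤ r := by
    refine (hratio.norm.eventually (ge_mem_nhds ?_))
    rwa [norm_neg, Real.norm_eq_abs]
  refine summable_of_ratio_norm_eventually_le hr1 ?_
  filter_upwards [hr] with m hm
  rw [dexpTerm_succ, norm_mul, mul_comm r]
  exact mul_le_mul_of_nonneg_left hm (norm_nonneg _)

lemma hasSum_descFactorial_mul_dexpTerm {lam y : ℝ} (hy : |lam * y| < 1) (x : ℝ) (q : ℕ) :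
    HasSum (fun m => (m.descFactorial q : ℝ) * dexpTerm lam x y m)
      (dff lam x q * y ^ q * ∑' j, dexpTerm lam (x - q * lam) y j) := by
  have hlow : ∑ m ∈ range q, (m.descFactorial q : ℝ) * dexpTerm lam x y m = 0 :=
    sum_eq_zero fun m hm => by
      rw [Nat.descFactorial_eq_zero_iff_lt.mpr (mem_range.mp hm), Nat.cast_zero, zero_mul]
  rw [← add_zero (_ * _ * _), ← hlow, ← hasSum_nat_add_iff]
  simp_rw [descFactorial_mul_dexpTerm_add]
  exact ((summable_dexpTerm hy _).hasSum).mul_left _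

lemma tsum_dexpTerm_eq_mul_tsum_dexpTerm_sub {lam y : ℝ} (hy : |lam * y| < 1) (x : ℝ) :
    ∑' m, dexpTerm lam x y m = (1 + lam * y) * ∑' m, dexpTerm lam (x - lam) y m := by
  have hx := summable_dexpTerm hy x
  have hx' := summable_dexpTerm hy (x - lam)
  have hsucc : ∑' m, dexpTerm lam x y (m + 1) - ∑' m, dexpTerm lam (x - lam) y (m + 1) =
      lam * y * ∑' m, dexpTerm lam (x - lam) y m := by
    rw [← ((summable_nat_add_iff 1).mpr hx).tsum_sub ((summable_nat_add_iff 1).mpr hx'),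
      ← tsum_mul_left]
    exact tsum_congr (dexpTerm_succ_sub lam x y)
  rw [hx'.tsum_eq_zero_add, dexpTerm_zero] at hsucc
  rw [hx.tsum_eq_zero_add, hx'.tsum_eq_zero_add, dexpTerm_zero, dexpTerm_zero]
  linear_combination hsucc

lemma dexp_eq_pow_mul_tsum_dexpTerm {lam y : ℝ} (hy : |lam * y| < 1) (k : ℕ) :
    dexp lam y = (1 + lam * y) ^ k * ∑' m, dexpTerm lam (1 - k * lam) y m := by
  induction k with
  | zero => simp [dexp_eq_tsum_dexpTerm]
  | succ k ih =>
    rw [ih, tsum_dexpTerm_eq_mul_tsum_dexpTerm_sub hy, pow_succ, mul_assoc]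
    push_cast
    ring_nf

lemma hasSum_descFactorial_mul_dexpTerm_one {lam y : ℝ} (hy : |lam * y| < 1) (q : ℕ) :
    HasSum (fun m => (m.descFactorial q : ℝ) * dexpTerm lam 1 y m)
      (dff lam 1 q * y ^ q * (1 + lam * y) ^ (-(q : ℤ)) * dexp lam y) := by
  have hne : 1 + lam * y ≠ 0 := by linarith [(abs_lt.mp hy).1]
  convert hasSum_descFactorial_mul_dexpTerm hy 1 q using 1
  rw [dexp_eq_pow_mul_tsum_dexpTerm hy q, zpow_neg, zpow_natCast]
  field_simp

lemma dtail_eq_tsum (lam y : ℝ) (hy : |lam * y| < 1) (n : ℕ) :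
    dtail lam y n = ∑' m, dexpTerm lam 1 y (m + (n + 1)) := by
  rw [dtail, dexp_eq_tsum_dexpTerm, ← (summable_dexpTerm hy 1).sum_add_tsum_nat_add (n + 1)]
  simp only [dexpTerm, add_sub_cancel_left]

theorem stmt_7 (p : ℕ) (lam y : ℝ) (hy : |lam * y| < 1) :
    HasSum (fun n : ℕ => (n.descFactorial p : ℝ) * dtail lam y n)
      (y ^ (p + 1) / (p + 1) * dff lam 1 (p + 1) *
        (1 + lam * y) ^ (-(p + 1 : ℤ)) * dexp lam y) := by
  have hweights : ∀ m : ℕ, (∑ n ∈ range m, (n.descFactorial p : ℝ)) * dexpTerm lam 1 y m =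
      (p + 1 : ℝ)⁻¹ * ((m.descFactorial (p + 1) : ℝ) * dexpTerm lam 1 y m) := fun m => by
    rw [← Nat.cast_sum, inv_mul_eq_div, eq_div_iff (by positivity), mul_right_comm,
      ← Nat.cast_succ, ← Nat.cast_mul, Nat.sum_range_descFactorial_mul]
  have hvalue : y ^ (p + 1) / (p + 1) * dff lam 1 (p + 1) * (1 + lam * y) ^ (-(p + 1 : ℤ)) *
      dexp lam y = (p + 1 : ℝ)⁻¹ * (dff lam 1 (p + 1) * y ^ (p + 1) *
        (1 + lam * y) ^ (-((p + 1 : ℕ) : ℤ)) * dexp lam y) := by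
    push_cast
    ring
  simp_rw [dtail_eq_tsum lam y hy, hvalue]
  refine hasSum_mul_tsum_tail (fun n => Nat.cast_nonneg _) (summable_dexpTerm hy 1) ?_
  simp_rw [hweights]
  exact (hasSum_descFactorial_mul_dexpTerm_one hy (p + 1)).mul_left _
end
end

section
/- For every natural number k and every real λ with k·|λ| < 1 and |λ| < 1, one has Σ_{n=0}^∞ S_2(n,k) T_n(1) = (1/k!) Σ_{j=0}^k C(k,j) (−1)^{k−j} F_j, where F_j = (e_λ(j) − e_λ(1))/(j − 1) for j ≠ 1 and F_1 = e_λ(1)/(1+λ) (the limiting value at j = 1), S_2(n,k) denotes the Stirling numbers of the second kind, and the series on the left converges. -/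
noncomputable section

/-- Stirling number of the second kind, as a real number:
`S_2(n,k) = (1/k!) ∑_{j=0}^k (-1)^{k-j} C(k,j) j^n`. -/
def stirling2 (n k : ℕ) : ℝ :=
  (1 / (k.factorial : ℝ)) *
    ∑ j ∈ Finset.range (k + 1), (-1 : ℝ) ^ (k - j) * (k.choose j : ℝ) * (j : ℝ) ^ n

/-!
Write `c_p = (1)_{p,λ} / p!`, so that `T_n(1) = ∑_{p > n} c_p`. Exchanging the order of summation,
`∑_n x^n T_n(1) = ∑_p (1 + x + ⋯ + x^{p-1}) c_p`, which is `(e_λ(x) - e_λ(1)) / (x - 1)` for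
`x ≠ 1`, and `∑_p p c_p = e_λ(1) / (1 + λ)` for `x = 1` by the recurrence
`(p + 1) c_{p+1} = (1 - pλ) c_p`. The same recurrence gives the absolute convergence that justifies
the exchange (ratio test, `|c_{p+1} / c_p| → |λ|`) as long as `|x| |λ| < 1` and `|λ| < 1`. The theorem is the
combination of these identities for `x = 0, …, k` with the coefficients of `S_2(n, k)`.
-/

open Filter Finset Topology

section TailSums

variable {𝕜 : Type*} [NormedField 𝕜]

theorem hasSum_ite_lt_pow_mul (x : 𝕜) (a : ℕ → 𝕜) (p : ℕ) :
    HasSum (fun n => if n < p then x ^ n * a p else 0) ((∑ n ∈ range p, x ^ n) * a p) := by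
  rw [sum_mul]
  convert hasSum_sum_of_ne_finset_zero (L := .unconditional ℕ) (s := range p)
    fun n hn => if_neg (mt mem_range.mpr hn) using 1
  exact sum_congr rfl fun n hn => (if_pos (mem_range.mp hn)).symm

variable [CompleteSpace 𝕜]

theorem HasSum.pow_mul_tsum_tail {a : ℕ → 𝕜} {x s : 𝕜}
    (habs : Summable fun p => (∑ n ∈ range p, ‖x‖ ^ n) * ‖a p‖)
    (hs : HasSum (fun p => (∑ n ∈ range p, x ^ n) * a p) s) :
    HasSum (fun n => x ^ n * ∑' m, a (m + (n + 1))) s := by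
  set F : ℕ × ℕ → 𝕜 := fun q => if q.2 < q.1 then x ^ q.2 * a q.1 else 0
  have hnorm (q : ℕ × ℕ) : ‖F q‖ = if q.2 < q.1 then ‖x‖ ^ q.2 * ‖a q.1‖ else 0 := by
    simp only [F]; split_ifs <;> simp [norm_mul, norm_pow]
  have hF : Summable F := by
    refine Summable.of_norm ((summable_prod_of_nonneg fun _ => norm_nonneg _).mpr ⟨?_, ?_⟩)
    · exact fun p => by simpa only [hnorm] using (hasSum_ite_lt_pow_mul ‖x‖ (‖a ·‖) p).summable
    · simpa only [hnorm, (hasSum_ite_lt_pow_mul ‖x‖ (‖a ·‖) _).tsum_eq] using habs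
  have hsF : HasSum F s := by
    rw [hs.unique (hF.hasSum.prod_fiberwise (hasSum_ite_lt_pow_mul x a))]
    exact hF.hasSum
  have hcol (n : ℕ) : HasSum (fun p => F (p, n)) (x ^ n * ∑' m, a (m + (n + 1))) := by
    have hc : Summable fun p => F (p, n) := hF.prod_symm.prod_factor n
    convert hc.hasSum using 1
    rw [← hc.sum_add_tsum_nat_add (n + 1), sum_eq_zero fun i hi => if_neg (by simp at hi; omega),
      _root_.zero_add, ← tsum_mul_left]
    exact tsum_congr fun m => (if_pos (by omega)).symm
  exact ((Equiv.prodComm ℕ ℕ).hasSum_iff.mpr hsF).prod_fiberwise hcol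

end TailSums

def dexpCoeff (lam : ℝ) (p : ℕ) : ℝ := dff lam 1 p / p.factorial

theorem dexpCoeff_succ (lam : ℝ) (p : ℕ) :
    dexpCoeff lam (p + 1) = dexpCoeff lam p * (1 - p * lam) / (p + 1) := by
  rw [dexpCoeff, dexpCoeff, dff, prod_range_succ, ← dff, Nat.factorial_succ]
  push_cast
  field_simp

theorem abs_dexpCoeff_succ_le (lam : ℝ) (p : ℕ) :
    |dexpCoeff lam (p + 1)| ≤ |dexpCoeff lam p| * (1 + p * |lam|) / (p + 1) := by
  rw [dexpCoeff_succ, abs_div, abs_mul, abs_of_pos (by positivity : (0 : ℝ) < p + 1)]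
  gcongr
  calc |1 - p * lam| ≤ |1| + |p * lam| := abs_sub _ _
    _ = 1 + p * |lam| := by rw [abs_one, abs_mul, Nat.abs_cast]

theorem summable_succ_mul_pow_mul_abs_dexpCoeff {lam M : ℝ} (hM : 0 ≤ M) (hML : M * |lam| < 1) :
    Summable fun p : ℕ => (p + 1) * M ^ p * |dexpCoeff lam p| := by
  set L := |lam|
  -- the ratio of consecutive terms is at most `M (L + ε) (1 + ε)` with `ε = 1/(p+1) → 0`
  have hratio (p : ℕ) : (p + 1 + 1) * M ^ (p + 1) * |dexpCoeff lam (p + 1)| ≤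
      M * (L + 1 / (p + 1)) * (1 + 1 / (p + 1)) * ((p + 1) * M ^ p * |dexpCoeff lam p|) := by
    calc (p + 1 + 1) * M ^ (p + 1) * |dexpCoeff lam (p + 1)|
        ≤ (p + 1 + 1) * M ^ (p + 1) * (|dexpCoeff lam p| * (1 + p * L) / (p + 1)) := by
          gcongr; exact abs_dexpCoeff_succ_le lam p
      _ ≤ (p + 1 + 1) * M ^ (p + 1) * (|dexpCoeff lam p| * (1 + (p + 1) * L) / (p + 1)) := by
          gcongr; linarith [abs_nonneg lam]
      _ = M * (L + 1 / (p + 1)) * (1 + 1 / (p + 1)) * ((p + 1) * M ^ p * |dexpCoeff lam p|) := by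
          field_simp
          ring
  have hlim : Tendsto (fun p : ℕ => M * (L + 1 / (p + 1)) * (1 + 1 / (p + 1))) atTop
      (𝓝 (M * L)) := by
    have h0 := tendsto_one_div_add_atTop_nhds_zero_nat (𝕜 := ℝ)
    simpa using (((tendsto_const_nhds (x := L)).add h0).const_mul M).mul
      ((tendsto_const_nhds (x := (1 : ℝ))).add h0)
  obtain ⟨r, hMLr, hr1⟩ := exists_between hML
  refine summable_of_ratio_norm_eventually_le hr1 ?_
  filter_upwards [hlim.eventually_lt_const hMLr] with p hp
  rw [Real.norm_of_nonneg (by positivity), Real.norm_of_nonneg (by positivity)]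
  push_cast
  exact (hratio p).trans (mul_le_mul_of_nonneg_right hp.le (by positivity))

theorem hasSum_dexpCoeff_mul_pow {lam y : ℝ} (hy : |y| * |lam| < 1) :
    HasSum (fun p : ℕ => dexpCoeff lam p * y ^ p) (dexp lam y) := by
  have hs : Summable fun p : ℕ => dexpCoeff lam p * y ^ p := by
    refine .of_norm_bounded (summable_succ_mul_pow_mul_abs_dexpCoeff (abs_nonneg y) hy) fun p => ?_
    rw [Real.norm_eq_abs, abs_mul, abs_pow]
    nlinarith [mul_nonneg (pow_nonneg (abs_nonneg y) p) (abs_nonneg (dexpCoeff lam p)),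
      p.cast_nonneg (α := ℝ)]
  simpa only [dexp, dexpCoeff, div_mul_eq_mul_div] using hs.hasSum

theorem hasSum_dexpCoeff {lam : ℝ} (hl : |lam| < 1) : HasSum (dexpCoeff lam) (dexp lam 1) := by
  simpa using hasSum_dexpCoeff_mul_pow (y := 1) (by simpa using hl)

theorem dtail_one_eq_tsum {lam : ℝ} (hl : |lam| < 1) (n : ℕ) :
    dtail lam 1 n = ∑' m, dexpCoeff lam (m + (n + 1)) := by
  rw [dtail, ← (hasSum_dexpCoeff hl).tsum_eq,
    ← (hasSum_dexpCoeff hl).summable.sum_add_tsum_nat_add (n + 1)]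
  simp [dexpCoeff]

theorem hasSum_natCast_mul_dexpCoeff {lam : ℝ} (hl : |lam| < 1) :
    HasSum (fun p : ℕ => p * dexpCoeff lam p) (dexp lam 1 / (1 + lam)) := by
  have hs : Summable fun p : ℕ => p * dexpCoeff lam p := by
    refine .of_norm_bounded (summable_succ_mul_pow_mul_abs_dexpCoeff zero_le_one
      (by simpa using hl)) fun p => ?_
    rw [Real.norm_eq_abs, abs_mul, Nat.abs_cast, one_pow, mul_one]
    gcongr; linarith
  set S := ∑' p : ℕ, p * dexpCoeff lam p
  -- `(p + 1) c_{p+1} = c_p - λ p c_p`, so shifting the index gives `S = e_λ(1) - λ S`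
  have hshift : HasSum (fun p : ℕ => dexpCoeff lam p - lam * (p * dexpCoeff lam p)) S := by
    have h := (hasSum_nat_add_iff' (f := fun p : ℕ => (p : ℝ) * dexpCoeff lam p) 1).mpr hs.hasSum
    simp only [sum_range_one, Nat.cast_zero, zero_mul, sub_zero] at h
    refine h.congr_fun fun p => ?_
    rw [dexpCoeff_succ]
    push_cast
    field_simp
  have hS := hshift.unique ((hasSum_dexpCoeff hl).sub (hs.hasSum.mul_left lam))
  have hval : dexp lam 1 / (1 + lam) = S := by
    rw [div_eq_iff (by linarith [neg_abs_le lam])]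
    linarith
  exact hval ▸ hs.hasSum

theorem hasSum_geomSum_mul_dexpCoeff {lam x : ℝ} (hx : |x| * |lam| < 1) (hl : |lam| < 1) :
    HasSum (fun p : ℕ => (∑ n ∈ range p, x ^ n) * dexpCoeff lam p)
      (if x = 1 then dexp lam 1 / (1 + lam) else (dexp lam x - dexp lam 1) / (x - 1)) := by
  split_ifs with hx1
  · subst hx1
    simpa using hasSum_natCast_mul_dexpCoeff hl
  · refine (((hasSum_dexpCoeff_mul_pow hx).sub (hasSum_dexpCoeff hl)).div_const (x - 1)).congr_fun
      fun p => ?_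
    rw [geom_sum_eq hx1]
    ring

theorem summable_geomSum_abs_mul_abs_dexpCoeff {lam x : ℝ} (hx : |x| * |lam| < 1)
    (hl : |lam| < 1) :
    Summable fun p : ℕ => (∑ n ∈ range p, |x| ^ n) * |dexpCoeff lam p| := by
  set M := max 1 |x|
  have hML : M * |lam| < 1 := by
    rw [max_mul_of_nonneg _ _ (abs_nonneg lam)]
    exact max_lt (by simpa using hl) hx
  refine .of_nonneg_of_le (fun p => by positivity) (fun p => ?_)
    (summable_succ_mul_pow_mul_abs_dexpCoeff (by positivity) hML)
  have hgeom : ∑ n ∈ range p, |x| ^ n ≤ p * M ^ p := by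
    calc ∑ n ∈ range p, |x| ^ n ≤ ∑ _n ∈ range p, M ^ p :=
          sum_le_sum fun n hn => (pow_le_pow_left₀ (abs_nonneg x) (le_max_right _ _) n).trans
            (pow_le_pow_right₀ (le_max_left _ _) (mem_range.mp hn).le)
      _ = p * M ^ p := by simp
  calc (∑ n ∈ range p, |x| ^ n) * |dexpCoeff lam p| ≤ (p * M ^ p) * |dexpCoeff lam p| := by gcongr
    _ ≤ (p + 1) * M ^ p * |dexpCoeff lam p| := by gcongr; linarith

theorem hasSum_pow_mul_dtail {lam x : ℝ} (hx : |x| * |lam| < 1) (hl : |lam| < 1) :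
    HasSum (fun n : ℕ => x ^ n * dtail lam 1 n)
      (if x = 1 then dexp lam 1 / (1 + lam) else (dexp lam x - dexp lam 1) / (x - 1)) := by
  simp_rw [dtail_one_eq_tsum hl]
  exact (hasSum_geomSum_mul_dexpCoeff hx hl).pow_mul_tsum_tail
    (by simpa only [Real.norm_eq_abs] using summable_geomSum_abs_mul_abs_dexpCoeff hx hl)

theorem stmt_12 (k : ℕ) (lam : ℝ) (hk : (k : ℝ) * |lam| < 1) (hl : |lam| < 1) :
    HasSum (fun n : ℕ => stirling2 n k * dtail lam 1 n)
      ((1 / (k.factorial : ℝ)) * ∑ j ∈ Finset.range (k + 1),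
        (k.choose j : ℝ) * (-1 : ℝ) ^ (k - j) *
          (if j = 1 then dexp lam 1 / (1 + lam)
           else (dexp lam j - dexp lam 1) / ((j : ℝ) - 1))) := by
  have hterm (j : ℕ) (hj : j ∈ range (k + 1)) : HasSum
      (fun n : ℕ => (k.choose j : ℝ) * (-1 : ℝ) ^ (k - j) * ((j : ℝ) ^ n * dtail lam 1 n))
      ((k.choose j : ℝ) * (-1 : ℝ) ^ (k - j) *
        (if j = 1 then dexp lam 1 / (1 + lam) else (dexp lam j - dexp lam 1) / ((j : ℝ) - 1))) := by
    have hjk : (j : ℝ) ≤ k := by exact_mod_cast Nat.lt_succ_iff.mp (mem_range.mp hj)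
    have hjlam : |(j : ℝ)| * |lam| < 1 := by
      rw [Nat.abs_cast]; nlinarith [abs_nonneg lam]
    simpa only [Nat.cast_eq_one] using (hasSum_pow_mul_dtail hjlam hl).mul_left _
  refine ((hasSum_sum hterm).mul_left (1 / (k.factorial : ℝ))).congr_fun fun n => ?_
  rw [stirling2, mul_assoc, sum_mul]
  exact congrArg _ (sum_congr rfl fun j _ => by ring)
end
end
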